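/- arXiv:2103.16261 — 2 statements merged into one kernel-verified Lean document; each statement's English description precedes it below -/
import Mathlib

section
/- Let y ∈ W^{1,p}(Ω;ℝ³) with det ∇y > 0 almost everywhere in Ω. Then y is almost everywhere injective if and only if it satisfies the Ciarlet–Nečas condition ∫_Ω det ∇y dx ≤ ℒ³(y(Ω)). -/
noncomputable section
open MeasureTheory Set Filter Topology

/-- We model `ℝ³` as `Fin 3 → ℝ` (with Lebesgue measure `volume`). -/
abbrev V3 := Fin 3 → ℝ
/-- 3×3 real matrices. -/
abbrev M3 := Matrix (Fin 3) (Fin 3) ℝ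

/-- Euclidean norm of a vector in `ℝ³`. -/
def vnorm (v : V3) : ℝ := Real.sqrt (∑ i, (v i) ^ 2)

/-- Frobenius norm of a matrix. -/
def mnorm (A : M3) : ℝ := Real.sqrt (∑ i, ∑ j, (A i j) ^ 2)

/-- The (a.e.-defined) gradient matrix of `y : ℝ³ → ℝ³`, `(∇y)_{ij} = ∂_j y_i`. -/
def gradM (y : V3 → V3) (x : V3) : M3 := Matrix.of fun i j => fderiv ℝ y x (Pi.single j 1) i

/-- Jacobian determinant `det ∇y`. -/
def detG (y : V3 → V3) (x : V3) : ℝ := (gradM y x).det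

/-- Cofactor matrix `cof A` (transpose of the adjugate). -/
def cofM (A : M3) : M3 := Matrix.transpose (Matrix.adjugate A)

/-- `adj A`, the transpose of the cofactor matrix (the classical adjugate). -/
def adjM (A : M3) : M3 := Matrix.adjugate A

/-- Gradient (as a vector) of a scalar function on `ℝ³`. -/
def gradS (φ : V3 → ℝ) (ξ : V3) : V3 := fun j => fderiv ℝ φ ξ (Pi.single j 1)

/-- Divergence of a vector field on `ℝ³`. -/
def divV (ψ : V3 → V3) (ξ : V3) : ℝ := ∑ i, fderiv ℝ ψ ξ (Pi.single i 1) i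

/-- The deformed configuration `Ω^y := y(Ω) \ y(∂Ω)`. -/
def defConfig (y : V3 → V3) (Ω : Set V3) : Set V3 := y '' Ω \ y '' frontier Ω

/-- `y` is almost everywhere injective on `Ω`: injective off a Lebesgue-null set. -/
def AEInjOn (y : V3 → V3) (Ω : Set V3) : Prop :=
  ∃ X ⊆ Ω, volume X = 0 ∧ Set.InjOn y (Ω \ X)

/-- Membership in `W^{1,p}(Ω;ℝ³)` (`p > 3`), identified with the continuous representative:
continuity up to the boundary, a.e. differentiability, and `L^p`-integrability of the
gradient. -/
def W1p (y : V3 → V3) (Ω : Set V3) (p : ℝ) : Prop :=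
  ContinuousOn y (closure Ω) ∧
  (∀ᵐ x ∂volume.restrict Ω, DifferentiableAt ℝ y x) ∧
  (∫⁻ x in Ω, ENNReal.ofReal (mnorm (gradM y x) ^ p)) < ⊤

/-- Lusin property (N) on a set `s`: null sets are mapped to null sets. -/
def LusinN (y : V3 → V3) (s : Set V3) : Prop :=
  ∀ A ⊆ s, volume A = 0 → volume (y '' A) = 0


/-!
On the full-measure set `s ⊆ Ω` where `y` is differentiable with `det ∇y > 0`, the area formula
gives `ℒ³(y(t)) ≤ ∫_t det ∇y` for every measurable `t ⊆ s`, with equality when `y` is injective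
on `t`; property (N) gives `ℒ³(y(s)) = ℒ³(y(Ω))`, and `p > 3` makes `det ∇y` integrable. So the
Ciarlet–Nečas condition says exactly that equality holds for `t = s`, and then, by additivity,
for every measurable `t ⊆ s`. For a basic open set `U`, equality on `s ∩ U`, `s \ U` and `s`
forces `y(s ∩ U)` and `y(s \ U)` to overlap in a null set; its preimage in `s ∩ U` is then a set
over which `∫ det ∇y = 0`, hence a null set. Discarding these null sets for the countably many
basic open sets leaves a set on which `y` is injective.
-/

theorem ContinuousOn.measurableSet_inter_preimage {α β : Type*} [TopologicalSpace α]
    [MeasurableSpace α] [OpensMeasurableSpace α] [TopologicalSpace β] [MeasurableSpace β]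
    [BorelSpace β] {f : α → β} {s : Set α} {t : Set β} (hf : ContinuousOn f s)
    (hs : MeasurableSet s) (ht : MeasurableSet t) : MeasurableSet (s ∩ f ⁻¹' t) :=
  Subtype.image_preimage_coe s (f ⁻¹' t) ▸ hs.subtype_image (hf.domRestrict.measurable ht)

theorem MeasureTheory.measure_inter_eq_zero_of_add_le_union {α : Type*} [MeasurableSpace α]
    {μ : Measure α} {s t : Set α} (ht : MeasurableSet t) (h : μ s + μ t ≤ μ (s ∪ t))
    (hfin : μ (s ∪ t) ≠ ⊤) : μ (s ∩ t) = 0 := by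
  have h' : μ (s ∪ t) + μ (s ∩ t) ≤ μ (s ∪ t) + 0 := by
    rwa [measure_union_add_inter s ht, add_zero]
  exact nonpos_iff_eq_zero.mp ((ENNReal.add_le_add_iff_left hfin).mp h')

namespace MeasureTheory

variable {E : Type*} [NormedAddCommGroup E] [NormedSpace ℝ E] [FiniteDimensional ℝ E]
  [MeasurableSpace E] [BorelSpace E] (μ : Measure E) [μ.IsAddHaarMeasure]
  {f : E → E} {f' : E → E →L[ℝ] E} {s : Set E}

theorem lintegral_abs_det_fderiv_le_addHaar_image_of_injOn_sdiff_null (hs : MeasurableSet s)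
    (hf' : ∀ x ∈ s, HasFDerivWithinAt f (f' x) s x) {N : Set E} (hN : μ N = 0)
    (hinj : InjOn f (s \ N)) :
    ∫⁻ x in s, ENNReal.ofReal |(f' x).det| ∂μ ≤ μ (f '' s) := by
  set M := toMeasurable μ N
  have hM : μ M = 0 := by rwa [measure_toMeasurable]
  have hs_ae : s \ M =ᵐ[μ] s := sdiff_ae_eq_self.mpr (measure_mono_null inter_subset_right hM)
  calc (∫⁻ x in s, ENNReal.ofReal |(f' x).det| ∂μ)
      = ∫⁻ x in s \ M, ENNReal.ofReal |(f' x).det| ∂μ := setLIntegral_congr hs_ae.symm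
    _ = μ (f '' (s \ M)) :=
        lintegral_abs_det_fderiv_eq_addHaar_image μ (hs.diff (measurableSet_toMeasurable μ N))
          (fun x hx => (hf' x hx.1).mono sdiff_subset)
          (hinj.mono (sdiff_subset_sdiff_right (subset_toMeasurable μ N)))
    _ ≤ μ (f '' s) := measure_mono (image_mono sdiff_subset)

theorem addHaar_image_eq_setLIntegral_of_le (hs : MeasurableSet s)
    (hf' : ∀ x ∈ s, HasFDerivWithinAt f (f' x) s x)
    (hle : ∫⁻ x in s, ENNReal.ofReal |(f' x).det| ∂μ ≤ μ (f '' s))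
    (hfin : ∫⁻ x in s, ENNReal.ofReal |(f' x).det| ∂μ ≠ ⊤)
    {t : Set E} (ht : MeasurableSet t) (hts : t ⊆ s) :
    μ (f '' t) = ∫⁻ x in t, ENNReal.ofReal |(f' x).det| ∂μ := by
  have hf'_mono : ∀ u ⊆ s, ∀ x ∈ u, HasFDerivWithinAt f (f' x) u x :=
    fun u hu x hx => (hf' x (hu hx)).mono hu
  have hrest_fin : ∫⁻ x in s \ t, ENNReal.ofReal |(f' x).det| ∂μ ≠ ⊤ :=
    ne_top_of_le_ne_top hfin (lintegral_mono_set sdiff_subset)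
  refine le_antisymm (addHaar_image_le_lintegral_abs_det_fderiv μ ht (hf'_mono t hts)) ?_
  refine (ENNReal.add_le_add_iff_right hrest_fin).mp ?_
  calc (∫⁻ x in t, ENNReal.ofReal |(f' x).det| ∂μ) + ∫⁻ x in s \ t, ENNReal.ofReal |(f' x).det| ∂μ
      = ∫⁻ x in s, ENNReal.ofReal |(f' x).det| ∂μ := by
        rw [← lintegral_union (hs.diff ht) disjoint_sdiff_right, union_sdiff_cancel hts]
    _ ≤ μ (f '' t ∪ f '' (s \ t)) := by rwa [← image_union, union_sdiff_cancel hts]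
    _ ≤ μ (f '' t) + μ (f '' (s \ t)) := measure_union_le _ _
    _ ≤ μ (f '' t) + ∫⁻ x in s \ t, ENNReal.ofReal |(f' x).det| ∂μ := by
        gcongr
        exact addHaar_image_le_lintegral_abs_det_fderiv μ (hs.diff ht) (hf'_mono _ sdiff_subset)

theorem exists_null_forall_image_ne_of_lintegral_le_addHaar_image (hs : MeasurableSet s)
    (hf' : ∀ x ∈ s, HasFDerivWithinAt f (f' x) s x) (hdet : ∀ x ∈ s, (f' x).det ≠ 0)
    (hle : ∫⁻ x in s, ENNReal.ofReal |(f' x).det| ∂μ ≤ μ (f '' s))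
    (hfin : ∫⁻ x in s, ENNReal.ofReal |(f' x).det| ∂μ ≠ ⊤) {U : Set E} (hU : MeasurableSet U) :
    ∃ N, μ N = 0 ∧ ∀ x ∈ (s ∩ U) \ N, ∀ x' ∈ s \ U, f x ≠ f x' := by
  set H := toMeasurable μ (f '' (s ∩ U))
  set G := toMeasurable μ (f '' (s \ U))
  set B := s ∩ U ∩ f ⁻¹' G
  refine ⟨B, ?_, fun x hx x' hx' hfx => hx.2 ⟨hx.1, subset_toMeasurable _ _ ⟨x', hx', hfx.symm⟩⟩⟩
  have hsplit : μ H + μ G = ∫⁻ x in s, ENNReal.ofReal |(f' x).det| ∂μ := by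
    rw [measure_toMeasurable, measure_toMeasurable,
      addHaar_image_eq_setLIntegral_of_le μ hs hf' hle hfin (hs.inter hU) inter_subset_left,
      addHaar_image_eq_setLIntegral_of_le μ hs hf' hle hfin (hs.diff hU) sdiff_subset,
      ← lintegral_union (hs.diff hU) disjoint_sdiff_inter.symm, inter_union_sdiff]
  have hHG : μ (H ∩ G) = 0 := by
    refine measure_inter_eq_zero_of_add_le_union (measurableSet_toMeasurable _ _) ?_ ?_
    · calc μ H + μ G ≤ μ (f '' s) := hsplit ▸ hle
        _ ≤ μ (H ∪ G) := by
          rw [← inter_union_sdiff s U, image_union]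
          exact measure_mono (union_subset_union (subset_toMeasurable _ _)
            (subset_toMeasurable _ _))
    · exact ne_top_of_le_ne_top (hsplit ▸ hfin) (measure_union_le H G)
  have hBs : B ⊆ s := fun x hx => hx.1.1
  have hBm : MeasurableSet B :=
    ContinuousOn.measurableSet_inter_preimage
      (fun x hx => (hf' x hx.1).continuousWithinAt.mono inter_subset_left) (hs.inter hU)
      (measurableSet_toMeasurable _ _)
  have hB_int : ∫⁻ x in B, ENNReal.ofReal |(f' x).det| ∂μ = 0 := by
    rw [← addHaar_image_eq_setLIntegral_of_le μ hs hf' hle hfin hBm hBs]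
    refine measure_mono_null ?_ hHG
    rintro _ ⟨x, hx, rfl⟩
    exact ⟨subset_toMeasurable _ _ ⟨x, hx.1, rfl⟩, hx.2⟩
  rw [setLIntegral_eq_zero_iff' hBm (aemeasurable_ofReal_abs_det_fderivWithin μ hBm
    fun x hx => (hf' x (hBs hx)).mono hBs)] at hB_int
  refine measure_eq_zero_iff_ae_notMem.mpr (hB_int.mono fun x hx hxB => hdet x (hBs hxB) ?_)
  simpa using hx hxB

theorem exists_null_injOn_sdiff_of_lintegral_le_addHaar_image (hs : MeasurableSet s)
    (hf' : ∀ x ∈ s, HasFDerivWithinAt f (f' x) s x) (hdet : ∀ x ∈ s, (f' x).det ≠ 0)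
    (hle : ∫⁻ x in s, ENNReal.ofReal |(f' x).det| ∂μ ≤ μ (f '' s))
    (hfin : ∫⁻ x in s, ENNReal.ofReal |(f' x).det| ∂μ ≠ ⊤) :
    ∃ N ⊆ s, μ N = 0 ∧ InjOn f (s \ N) := by
  obtain ⟨b, hbc, -, hb⟩ := TopologicalSpace.exists_countable_basis E
  choose! N hN hN_ne using fun U (hU : U ∈ b) =>
    exists_null_forall_image_ne_of_lintegral_le_addHaar_image μ hs hf' hdet hle hfin
      (hb.isOpen hU).measurableSet
  refine ⟨s ∩ ⋃ U ∈ b, N U, inter_subset_left,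
    measure_mono_null inter_subset_right ((measure_biUnion_null_iff hbc).mpr hN), ?_⟩
  intro x hx x' hx' hfx
  by_contra hne
  obtain ⟨U, hUb, hxU, hU⟩ :=
    hb.exists_subset_of_mem_open (mem_compl_singleton_iff.mpr hne) isOpen_compl_singleton
  exact hN_ne U hUb x ⟨⟨hx.1, hxU⟩, fun h => hx.2 ⟨hx.1, mem_biUnion hUb h⟩⟩ x'
    ⟨hx'.1, fun h => hU h rfl⟩ hfx

theorem exists_null_injOn_sdiff_iff_lintegral_le_addHaar_image (hs : MeasurableSet s)
    (hf' : ∀ x ∈ s, HasFDerivWithinAt f (f' x) s x) (hdet : ∀ x ∈ s, (f' x).det ≠ 0)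
    (hfin : ∫⁻ x in s, ENNReal.ofReal |(f' x).det| ∂μ ≠ ⊤) :
    (∃ N ⊆ s, μ N = 0 ∧ InjOn f (s \ N)) ↔
      ∫⁻ x in s, ENNReal.ofReal |(f' x).det| ∂μ ≤ μ (f '' s) :=
  ⟨fun ⟨_, _, hN, hinj⟩ =>
      lintegral_abs_det_fderiv_le_addHaar_image_of_injOn_sdiff_null μ hs hf' hN hinj,
    fun hle => exists_null_injOn_sdiff_of_lintegral_le_addHaar_image μ hs hf' hdet hle hfin⟩

end MeasureTheory

theorem detG_eq_det_fderiv (y : V3 → V3) (x : V3) : detG y x = (fderiv ℝ y x).det := by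
  rw [ContinuousLinearMap.det, ← LinearMap.det_toMatrix (Pi.basisFun ℝ (Fin 3)), detG]
  congr 1

theorem measurable_detG (y : V3 → V3) : Measurable (detG y) := by
  simp only [funext (detG_eq_det_fderiv y)]
  exact ContinuousLinearMap.continuous_det.measurable.comp (measurable_fderiv ℝ y)

theorem pow_le_one_add_rpow {t p : ℝ} {n : ℕ} (ht : 0 ≤ t) (hn : n ≤ p) : t ^ n ≤ 1 + t ^ p := by
  rcases le_or_gt t 1 with ht1 | ht1
  · linarith [pow_le_one₀ ht ht1 (n := n), Real.rpow_nonneg ht p]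
  · rw [← Real.rpow_natCast]
    linarith [Real.rpow_le_rpow_of_exponent_le ht1.le hn]

theorem abs_det_le_mnorm_rpow (A : M3) {p : ℝ} (hp : 3 ≤ p) : |A.det| ≤ 6 * (1 + mnorm A ^ p) := by
  have hentry (i j : Fin 3) : |A i j| ≤ mnorm A := by
    rw [mnorm, ← Real.sqrt_sq_eq_abs]
    gcongr
    calc A i j ^ 2 ≤ ∑ j', A i j' ^ 2 :=
          Finset.single_le_sum (fun _ _ => sq_nonneg _) (Finset.mem_univ j)
      _ ≤ ∑ i', ∑ j', A i' j' ^ 2 :=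
          Finset.single_le_sum (f := fun i' => ∑ j', A i' j' ^ 2)
            (fun _ _ => Finset.sum_nonneg fun _ _ => sq_nonneg _) (Finset.mem_univ i)
  calc |A.det| ≤ 6 * mnorm A ^ 3 := by
        simpa [Nat.factorial] using Matrix.det_le (abv := AbsoluteValue.abs) hentry
    _ ≤ 6 * (1 + mnorm A ^ p) := by
        gcongr
        exact pow_le_one_add_rpow (Real.sqrt_nonneg _) (by exact_mod_cast hp)

theorem integrableOn_detG {Ω : Set V3} (hΩ : volume Ω ≠ ⊤) {p : ℝ} (hp : 3 ≤ p) {y : V3 → V3}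
    (hLp : (∫⁻ x in Ω, ENNReal.ofReal (mnorm (gradM y x) ^ p)) < ⊤) :
    IntegrableOn (detG y) Ω := by
  refine ⟨(measurable_detG y).aestronglyMeasurable, ?_⟩
  calc ∫⁻ x in Ω, ‖detG y x‖ₑ
      ≤ ∫⁻ x in Ω, 6 * (1 + ENNReal.ofReal (mnorm (gradM y x) ^ p)) := by
        refine lintegral_mono fun x => ?_
        have hm : 0 ≤ mnorm (gradM y x) ^ p := Real.rpow_nonneg (Real.sqrt_nonneg _) p
        rw [Real.enorm_eq_ofReal_abs]
        refine (ENNReal.ofReal_le_ofReal (abs_det_le_mnorm_rpow _ hp)).trans_eq ?_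
        rw [ENNReal.ofReal_mul (by norm_num), ENNReal.ofReal_add zero_le_one hm]
        norm_num
    _ = 6 * (volume Ω + ∫⁻ x in Ω, ENNReal.ofReal (mnorm (gradM y x) ^ p)) := by
        rw [lintegral_const_mul' _ _ (by norm_num), lintegral_add_left measurable_const,
          setLIntegral_const, one_mul]
    _ < ⊤ := by finiteness

theorem exists_subset_measure_sdiff_eq_zero_differentiableAt_detG_pos {Ω : Set V3}
    (hΩ : MeasurableSet Ω) {y : V3 → V3} (hdiff : ∀ᵐ x ∂volume.restrict Ω, DifferentiableAt ℝ y x)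
    (hdet : ∀ᵐ x ∂volume.restrict Ω, 0 < detG y x) :
    ∃ s ⊆ Ω, MeasurableSet s ∧ volume (Ω \ s) = 0 ∧
      ∀ x ∈ s, DifferentiableAt ℝ y x ∧ 0 < detG y x := by
  set S := {x | DifferentiableAt ℝ y x ∧ 0 < detG y x}
  have hS : MeasurableSet S := (measurableSet_of_differentiableAt ℝ y).inter
    (measurableSet_lt measurable_const (measurable_detG y))
  refine ⟨Ω ∩ S, inter_subset_left, hΩ.inter hS, ?_, fun x hx => hx.2⟩
  rw [sdiff_self_inter, measure_eq_zero_iff_ae_notMem]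
  filter_upwards [(ae_restrict_iff' hΩ).mp (hdiff.and hdet)] with x hx hxΩ
  exact hxΩ.2 (hx hxΩ.1)

theorem LusinN.measure_image_eq_of_measure_sdiff_eq_zero {y : V3 → V3} {t Ω s : Set V3}
    (hy : LusinN y t) (hΩt : Ω ⊆ t) (hsΩ : s ⊆ Ω) (hs : volume (Ω \ s) = 0) :
    volume (y '' s) = volume (y '' Ω) := by
  refine le_antisymm (measure_mono (image_mono hsΩ)) ?_
  calc volume (y '' Ω) ≤ volume (y '' s ∪ y '' (Ω \ s)) := by
        rw [← image_union, union_sdiff_cancel hsΩ]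
    _ ≤ volume (y '' s) + volume (y '' (Ω \ s)) := measure_union_le _ _
    _ = volume (y '' s) := by
        rw [hy _ (sdiff_subset.trans hΩt) hs, add_zero]

theorem aeInjOn_iff_of_measure_sdiff_eq_zero {y : V3 → V3} {Ω s : Set V3} (hsΩ : s ⊆ Ω)
    (hs : volume (Ω \ s) = 0) : AEInjOn y Ω ↔ AEInjOn y s := by
  unfold AEInjOn
  constructor
  · rintro ⟨X, -, hX, hinj⟩
    refine ⟨s ∩ X, inter_subset_left, measure_mono_null inter_subset_right hX, hinj.mono ?_⟩
    exact fun x hx => ⟨hsΩ hx.1, fun hxX => hx.2 ⟨hx.1, hxX⟩⟩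
  · rintro ⟨N, -, hN, hinj⟩
    refine ⟨Ω \ (s \ N), sdiff_subset, measure_mono_null ?_ (measure_union_null hs hN), ?_⟩
    · intro x hx
      by_cases hxs : x ∈ s
      · exact Or.inr (not_not.mp fun hxN => hx.2 ⟨hxs, hxN⟩)
      · exact Or.inl ⟨hx.1, hxs⟩
    · rwa [sdiff_sdiff_cancel_left (sdiff_subset.trans hsΩ)]

theorem aeInjective_iff_ciarlet_necas_general
    (Ω : Set V3) (hΩo : IsOpen Ω) (hΩb : Bornology.IsBounded Ω)
    (p : ℝ) (hp : 3 < p)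
    (y : V3 → V3) (hy : W1p y Ω p)
    (hLusin : LusinN y (closure Ω))
    (hdet : ∀ᵐ x ∂volume.restrict Ω, 0 < detG y x) :
    AEInjOn y Ω ↔ (∫ x in Ω, detG y x) ≤ (volume (y '' Ω)).toReal := by
  obtain ⟨-, hdiff, hLp⟩ := hy
  obtain ⟨s, hsΩ, hs, hΩs, hs_good⟩ :=
    exists_subset_measure_sdiff_eq_zero_differentiableAt_detG_pos hΩo.measurableSet hdiff hdet
  have hf' : ∀ x ∈ s, HasFDerivWithinAt y (fderiv ℝ y x) s x :=
    fun x hx => (hs_good x hx).1.hasFDerivAt.hasFDerivWithinAt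
  have hdet_ne : ∀ x ∈ s, (fderiv ℝ y x).det ≠ 0 :=
    fun x hx => detG_eq_det_fderiv y x ▸ (hs_good x hx).2.ne'
  have hI : ∫⁻ x in s, ENNReal.ofReal |(fderiv ℝ y x).det| =
      ENNReal.ofReal (∫ x in Ω, detG y x) := by
    rw [ofReal_integral_eq_lintegral_ofReal
        (integrableOn_detG hΩb.measure_lt_top.ne hp.le hLp) (hdet.mono fun x hx => hx.le),
      ← setLIntegral_congr (ae_eq_set.mpr ⟨by simp [sdiff_eq_empty.mpr hsΩ], hΩs⟩)]
    exact setLIntegral_congr_fun hs fun x hx => by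
      rw [← detG_eq_det_fderiv, abs_of_pos (hs_good x hx).2]
  have hV : volume (y '' s) = volume (y '' Ω) :=
    hLusin.measure_image_eq_of_measure_sdiff_eq_zero subset_closure hsΩ hΩs
  have hV_le : volume (y '' s) ≤ ENNReal.ofReal (∫ x in Ω, detG y x) :=
    hI ▸ addHaar_image_le_lintegral_abs_det_fderiv volume hs hf'
  rw [aeInjOn_iff_of_measure_sdiff_eq_zero hsΩ hΩs, AEInjOn,
    exists_null_injOn_sdiff_iff_lintegral_le_addHaar_image volume hs hf' hdet_ne
      (hI ▸ ENNReal.ofReal_ne_top), hI, hV,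
    ENNReal.ofReal_le_iff_le_toReal (hV ▸ ne_top_of_le_ne_top ENNReal.ofReal_ne_top hV_le)]

/-- Ciarlet–Nečas condition.
Let `Ω ⊂ ℝ³` be a bounded Lipschitz domain, `p > 3`, and `y ∈ W^{1,p}(Ω;ℝ³)` (continuous
representative, with the Lusin property (N)) with `det ∇y > 0` a.e. in `Ω`. Then `y` is almost
everywhere injective if and only if `∫_Ω det ∇y dx ≤ ℒ³(y(Ω))`. -/
theorem aeInjective_iff_ciarlet_necas
    (Ω : Set V3) (hΩo : IsOpen Ω) (hΩb : Bornology.IsBounded Ω) (hΩne : Ω.Nonempty)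
    (p : ℝ) (hp : 3 < p)
    (y : V3 → V3) (hy : W1p y Ω p)
    (hLusin : LusinN y (closure Ω))
    (hdet : ∀ᵐ x ∂volume.restrict Ω, 0 < detG y x) :
    AEInjOn y Ω ↔ (∫ x in Ω, detG y x) ≤ (volume (y '' Ω)).toReal :=
  aeInjective_iff_ciarlet_necas_general Ω hΩo hΩb p hp y hy hLusin hdet
end
end

section
/- Let q = (y,m) ∈ 𝒬, let R ∈ SO(3), c ∈ ℝ³, and define the rigid motion T(ξ) := Rξ + c. Set ỹ := T ∘ y and m̃ := R·(m ∘ T^{-1}) on Ω^{ỹ} = T(Ω^y). Then the state q̃ = (ỹ, m̃) satisfies 𝒵(q̃) = 𝒵(q) almost everywhere in Ω, and hence 𝒟(q̃, q) = 0. -/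
noncomputable section
open MeasureTheory Set Filter Topology

/-- The admissible deformation class `𝒴`: `W^{1,p}` regularity, positive Jacobian a.e.,
a.e. injectivity, and boundary condition `y = ȳ` on `Γ`. -/
def inY (Ω Γ : Set V3) (ybar : V3 → V3) (p : ℝ) (y : V3 → V3) : Prop :=
  W1p y Ω p ∧ (∀ᵐ x ∂volume.restrict Ω, 0 < detG y x) ∧ AEInjOn y Ω ∧ Set.EqOn y ybar Γ

/-- Admissible magnetization: `m ∈ W^{1,2}(Ω^y; S²)`. -/
def inMag (y : V3 → V3) (Ω : Set V3) (m : V3 → V3) : Prop :=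
  (∀ᵐ ξ ∂volume.restrict (defConfig y Ω), vnorm (m ξ) = 1) ∧
  (∀ᵐ ξ ∂volume.restrict (defConfig y Ω), DifferentiableAt ℝ m ξ) ∧
  (∫⁻ ξ in defConfig y Ω, ENNReal.ofReal (mnorm (gradM m ξ) ^ 2)) < ⊤

/-- The homogeneous Sobolev space `V^{1,2}(ℝ³) = {φ ∈ L²_loc : ∇φ ∈ L²(ℝ³;ℝ³)}`. -/
def inV12 (φ : V3 → ℝ) : Prop :=
  (∀ᵐ ξ, DifferentiableAt ℝ φ ξ) ∧
  (∀ K : Set V3, IsCompact K → (∫⁻ ξ in K, ENNReal.ofReal ((φ ξ) ^ 2)) < ⊤) ∧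
  (∫⁻ ξ, ENNReal.ofReal (vnorm (gradS φ ξ) ^ 2)) < ⊤

/-- `ζ` is a weak solution of the magnetostatic Maxwell equation `Δζ = div (χ_{Ω^y} m)`. -/
def IsStrayField (Ω : Set V3) (y m : V3 → V3) (ζ : V3 → ℝ) : Prop :=
  inV12 ζ ∧ ∀ φ : V3 → ℝ, inV12 φ →
    (∫ ξ, ∑ j, gradS ζ ξ j * gradS φ ξ j) =
      ∫ ξ in defConfig y Ω, ∑ j, m ξ j * gradS φ ξ j

/-- `curl m · m`, the Dzyaloshinskii–Moriya interaction density. -/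
def curlDot (m : V3 → V3) (ξ : V3) : ℝ :=
  (gradM m ξ 2 1 - gradM m ξ 1 2) * m ξ 0 +
  (gradM m ξ 0 2 - gradM m ξ 2 0) * m ξ 1 +
  (gradM m ξ 1 0 - gradM m ξ 0 1) * m ξ 2

/-- The magnetoelastic energy
`E(q) = ∫_Ω W(∇y, m∘y) + α ∫_{Ω^y} |∇m|² + (μ₀/2) ∫_{ℝ³} |∇ζ_m|² + κ ∫_{Ω^y} curl m · m`. -/
def energyE (Ω : Set V3) (W : M3 → V3 → ℝ) (α μ₀ κ : ℝ) (y m : V3 → V3) (ζ : V3 → ℝ) : ℝ :=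
  (∫ x in Ω, W (gradM y x) (m (y x))) +
  α * (∫ ξ in defConfig y Ω, mnorm (gradM m ξ) ^ 2) +
  μ₀ / 2 * (∫ ξ, vnorm (gradS ζ ξ) ^ 2) +
  κ * (∫ ξ in defConfig y Ω, curlDot m ξ)

/-- `E(q) < +∞`: the elastic energy density is integrable (all the remaining terms of the
energy are finite for admissible states). -/
def FiniteElastic (Ω : Set V3) (W : M3 → V3 → ℝ) (y m : V3 → V3) : Prop :=
  IntegrableOn (fun x => W (gradM y x) (m (y x))) Ω

/-- Continuity of the stored energy density on `ℝ^{3×3}_+ × S²`. -/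
def WCont (W : M3 → V3 → ℝ) : Prop :=
  ContinuousOn (fun q : M3 × V3 => W q.1 q.2) {q : M3 × V3 | 0 < q.1.det ∧ vnorm q.2 = 1}

/-- `W ≥ 0`. -/
def WNonneg (W : M3 → V3 → ℝ) : Prop := ∀ F lam, 0 ≤ W F lam

/-- Coercivity: `W(F,λ) ≥ K |F|^p + γ(det F)` with `K > 0` and `γ` Borel, nonnegative and
blowing up under extreme compression. -/
def WCoercive (W : M3 → V3 → ℝ) (p K : ℝ) (γ : ℝ → ℝ) : Prop :=
  0 < K ∧ Measurable γ ∧ (∀ d : ℝ, 0 ≤ γ d) ∧ Tendsto γ (𝓝[>] 0) atTop ∧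
  ∀ F lam, 0 < F.det → vnorm lam = 1 → K * mnorm F ^ p + γ F.det ≤ W F lam

/-- Polyconvexity: `W(F,λ) = Ŵ(F, cof F, det F, λ)` with `Ŵ(·,·,·,λ)` convex. -/
def WPolyconvex (W : M3 → V3 → ℝ) : Prop :=
  ∃ Wh : M3 × M3 × ℝ → V3 → ℝ,
    (∀ t lam, 0 ≤ Wh t lam) ∧
    (∀ lam, vnorm lam = 1 → ConvexOn ℝ {t : M3 × M3 × ℝ | 0 < t.2.2} (fun t => Wh t lam)) ∧
    ∀ F lam, 0 < F.det → vnorm lam = 1 → W F lam = Wh (F, cofM F, F.det) lam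

/-- The Lagrangean magnetization `𝒵(q) = (adj ∇y) (m ∘ y)`. -/
def Zmag (y m : V3 → V3) (x : V3) : V3 := (adjM (gradM y x)).mulVec (m (y x))

/-- The dissipation distance `𝒟(q,q̂) = ∫_Ω |𝒵(q) − 𝒵(q̂)| dx`. -/
def dissD (Ω : Set V3) (y m y' m' : V3 → V3) : ℝ :=
  ∫ x in Ω, vnorm (Zmag y m x - Zmag y' m' x)

open Matrix

section RigidMotion

variable {n α : Type*} [Fintype n] [DecidableEq n] [CommRing α]

theorem Matrix.adjugate_eq_transpose_of_transpose_mul_self {R : Matrix n n α}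
    (hR : Rᵀ * R = 1) (hRdet : R.det = 1) : adjugate R = Rᵀ := by
  calc adjugate R = adjugate R * (R * Rᵀ) := by rw [mul_eq_one_comm.mp hR, mul_one]
    _ = Rᵀ := by rw [← mul_assoc, adjugate_mul, hRdet, one_smul, one_mul]

theorem Matrix.leftInverse_affine_of_transpose_mul_self {R : Matrix n n α} (hR : Rᵀ * R = 1)
    (c : n → α) : Function.LeftInverse (fun ξ => Rᵀ *ᵥ (ξ - c)) (fun ξ => R *ᵥ ξ + c) :=
  fun ξ => by simp only [add_sub_cancel_right, mulVec_mulVec, hR, one_mulVec]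

end RigidMotion

theorem defConfig_comp_of_injective {T : V3 → V3} (hT : Function.Injective T) (y : V3 → V3)
    (Ω : Set V3) : defConfig (T ∘ y) Ω = T '' defConfig y Ω := by
  simp only [defConfig, image_comp, image_sdiff hT]

theorem gradM_affine_comp (R : M3) (c : V3) {y : V3 → V3} {x : V3}
    (hy : DifferentiableAt ℝ y x) : gradM (fun x => R *ᵥ y x + c) x = R * gradM y x := by
  have hder : HasFDerivAt (fun x => R *ᵥ y x + c)
      ((LinearMap.toContinuousLinearMap (mulVecLin R)).comp (fderiv ℝ y x)) x :=
    ((LinearMap.toContinuousLinearMap (mulVecLin R)).hasFDerivAt.comp x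
      hy.hasFDerivAt).add_const c
  ext i j
  simp [gradM, hder.fderiv, mul_apply, mulVec, dotProduct]

/-- `adj (R ∇y) = adj ∇y · adj R = adj ∇y · Rᵀ`, and this `Rᵀ` cancels the `R` rotating `m`. -/
theorem Zmag_rigid_motion {R : M3} (hR : Rᵀ * R = 1) (hRdet : R.det = 1) (c : V3)
    {y : V3 → V3} (m : V3 → V3) {x : V3} (hy : DifferentiableAt ℝ y x) :
    Zmag (fun x => R *ᵥ y x + c) (fun ξ => R *ᵥ m (Rᵀ *ᵥ (ξ - c))) x = Zmag y m x := by
  simp only [Zmag, adjM, gradM_affine_comp R c hy,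
    leftInverse_affine_of_transpose_mul_self hR c (y x), adjugate_mul_distrib,
    adjugate_eq_transpose_of_transpose_mul_self hR hRdet, mulVec_mulVec, mul_assoc, hR, mul_one]

theorem dissD_eq_zero_of_ae_eq {Ω : Set V3} {y m y' m' : V3 → V3}
    (h : ∀ᵐ x ∂volume.restrict Ω, Zmag y m x = Zmag y' m' x) : dissD Ω y m y' m' = 0 := by
  refine (integral_congr_ae ?_).trans (integral_zero _ _)
  filter_upwards [h] with x hx
  simp [hx, vnorm]

theorem rigid_motion_zero_dissipation_general
    (Ω : Set V3)
    (p : ℝ)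
    (y m : V3 → V3)
    (hy : W1p y Ω p)
    (R : M3) (hR : Matrix.transpose R * R = 1) (hRdet : R.det = 1) (c : V3)
    (T : V3 → V3) (hT : ∀ ξ, T ξ = R.mulVec ξ + c)
    (yt : V3 → V3) (hyt : ∀ x, yt x = T (y x))
    (mt : V3 → V3) (hmt : ∀ ξ, mt ξ = R.mulVec (m ((Matrix.transpose R).mulVec (ξ - c)))) :
    defConfig yt Ω = T '' defConfig y Ω ∧
    (∀ᵐ x ∂volume.restrict Ω, Zmag yt mt x = Zmag y m x) ∧
    dissD Ω yt mt y m = 0 := by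
  obtain rfl : T = fun ξ => R *ᵥ ξ + c := funext hT
  obtain rfl : yt = fun x => R *ᵥ y x + c := funext hyt
  obtain rfl : mt = fun ξ => R *ᵥ m (Rᵀ *ᵥ (ξ - c)) := funext hmt
  have hZ := hy.2.1.mono fun x hx => Zmag_rigid_motion hR hRdet c m hx
  have hTinj := (leftInverse_affine_of_transpose_mul_self hR c).injective
  exact ⟨defConfig_comp_of_injective hTinj y Ω, hZ, dissD_eq_zero_of_ae_eq hZ⟩

/-- Rigid motions create no dissipation.
Let `q = (y,m) ∈ 𝒬`, `R ∈ SO(3)`, `c ∈ ℝ³` and `T(ξ) = Rξ + c`. With `ỹ = T ∘ y` and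
`m̃ = R (m ∘ T⁻¹)` on `Ω^{ỹ} = T(Ω^y)`, the state `q̃ = (ỹ,m̃)` satisfies `𝒵(q̃) = 𝒵(q)`
a.e. in `Ω`, hence `𝒟(q̃,q) = 0`. -/
theorem rigid_motion_zero_dissipation
    (Ω : Set V3) (hΩo : IsOpen Ω) (hΩb : Bornology.IsBounded Ω) (hΩne : Ω.Nonempty)
    (p : ℝ) (hp : 3 < p)
    (y m : V3 → V3)
    (hy : W1p y Ω p)
    (hdet : ∀ᵐ x ∂volume.restrict Ω, 0 < detG y x)
    (hinj : AEInjOn y Ω)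
    (hm : inMag y Ω m)
    (R : M3) (hR : Matrix.transpose R * R = 1) (hRdet : R.det = 1) (c : V3)
    (T : V3 → V3) (hT : ∀ ξ, T ξ = R.mulVec ξ + c)
    (yt : V3 → V3) (hyt : ∀ x, yt x = T (y x))
    (mt : V3 → V3) (hmt : ∀ ξ, mt ξ = R.mulVec (m ((Matrix.transpose R).mulVec (ξ - c)))) :
    defConfig yt Ω = T '' defConfig y Ω ∧
    (∀ᵐ x ∂volume.restrict Ω, Zmag yt mt x = Zmag y m x) ∧
    dissD Ω yt mt y m = 0 :=
  rigid_motion_zero_dissipation_general Ω p y m hy R hR hRdet c T hT yt hyt mt hmt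
end
end
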